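/- arXiv:1311.3922 — 3 statements merged into one kernel-verified Lean document; each statement's English description precedes it below -/
import Mathlib

section
/- For all interval-posets I1 and I2, the identity Σ_{I ∈ 𝔹(I1,I2)} x^{trees(I)} = x^{trees(I1)+1} · (1 + x + x² + ⋯ + x^{trees(I2)}) holds in ℤ[x]. -/
/-- An interval-poset: a partial order on `{1, …, n}` in which, whenever
`a ⊴ c` and `a < c`, all `a < b < c` satisfy `b ⊴ c`, and whenever `c ⊴ a` and
`a < c`, all `a < b < c` satisfy `b ⊴ a`.  `rel x y` means "`x` is below `y`". -/
structure IntervalPoset : Type where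
  n : ℕ
  rel : ℕ → ℕ → Prop
  supp : ∀ a b, rel a b → 1 ≤ a ∧ a ≤ n ∧ 1 ≤ b ∧ b ≤ n
  refl : ∀ a, 1 ≤ a → a ≤ n → rel a a
  antisymm : ∀ a b, rel a b → rel b a → a = b
  trans : ∀ a b c, rel a b → rel b c → rel a c
  incCond : ∀ a b c, rel a c → a < b → b < c → rel b c
  decCond : ∀ a b c, rel c a → a < b → b < c → rel b a

/-- `decBelow I x y` : `x` is below `y` by a decreasing relation of `I`. -/
def decBelow (I : IntervalPoset) (x y : ℕ) : Prop := I.rel x y ∧ y < x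

/-- Connectivity in `dec I` (the poset of decreasing relations of `I`). -/
def decConn (I : IntervalPoset) : ℕ → ℕ → Prop :=
  Relation.ReflTransGen (fun a b => decBelow I a b ∨ decBelow I b a)

/-- `compMin I r` : `r` is the least label of a connected component of `dec I`. -/
def compMin (I : IntervalPoset) (r : ℕ) : Prop :=
  1 ≤ r ∧ r ≤ I.n ∧ ∀ y, decConn I r y → r ≤ y

/-- `trees I` : the number of connected components of `dec I`. -/
noncomputable def trees (I : IntervalPoset) : ℕ := {r | compMin I r}.ncard

/-- The composition `𝔹(I1, I2)` of two interval-posets: all interval-posets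
`I` of size `I1.n + I2.n + 1` whose induced subposet on `{1, …, k1}` is `I1`,
whose induced subposet on `{k1+2, …, k1+k2+1}` is `I2` shifted by `k1+1`, with
`i ⊴ k1+1` for all `i ≤ k1` and `k1+1 ⊴ j` for no `j > k1+1`. -/
def comp (I1 I2 : IntervalPoset) : Set IntervalPoset :=
  {I | I.n = I1.n + I2.n + 1 ∧
    (∀ a b, 1 ≤ a → a ≤ I1.n → 1 ≤ b → b ≤ I1.n → (I.rel a b ↔ I1.rel a b)) ∧
    (∀ a b, 1 ≤ a → a ≤ I2.n → 1 ≤ b → b ≤ I2.n →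
      (I.rel (a + I1.n + 1) (b + I1.n + 1) ↔ I2.rel a b)) ∧
    (∀ i, 1 ≤ i → i ≤ I1.n → I.rel i (I1.n + 1)) ∧
    (∀ j, I1.n + 1 < j → ¬ I.rel (I1.n + 1) j)}

/-!
If `I ∈ 𝔹(I₁, I₂)`, the interval conditions force `I` to be determined by the number `m` of
elements `k₁ + 1 + j` of the right block that lie below the root `k₁ + 1`; they form a prefix
`{1, …, m}` of `I₂` that is a lower set of `I₂`, and every such prefix occurs. These prefixes are
`m = k₂` and `m = r - 1` for `r` the least label of a tree of `dec(I₂)`, so there are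
`trees(I₂) + 1` of them. In the poset built from `m`, the root swallows the trees of `I₂` inside
the prefix while all other trees of `I₁` and `I₂` survive, which gives `trees(I₁) + 1 + i` trees,
with `i` running once over each of `0, …, trees(I₂)`.
-/

theorem Relation.ReflTransGen.lift_symm_of_invariant {α β : Type*} {r : α → α → Prop}
    {s : β → β → Prop} {p : α → Prop} (f : α → β) (hp : ∀ a b, r a b → (p a ↔ p b))
    (hs : ∀ a b, r a b → p a → s (f a) (f b)) {a b : α}
    (h : Relation.ReflTransGen (fun x y => r x y ∨ r y x) a b) (ha : p a) :
    p b ∧ Relation.ReflTransGen (fun x y => s x y ∨ s y x) (f a) (f b) := by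
  induction h with
  | refl => exact ⟨ha, .refl⟩
  | tail _ hbc ih =>
    obtain ⟨hb, hab⟩ := ih
    rcases hbc with hbc | hcb
    · exact ⟨(hp _ _ hbc).1 hb, hab.tail (Or.inl (hs _ _ hbc hb))⟩
    · have hc := (hp _ _ hcb).2 hb
      exact ⟨hc, hab.tail (Or.inr (hs _ _ hcb hc))⟩

namespace IntervalPoset

open Classical

theorem ext {I J : IntervalPoset} (hn : I.n = J.n) (hrel : I.rel = J.rel) : I = J := by
  cases I
  cases J
  subst hn hrel
  rfl

def IsLowerPrefix (I : IntervalPoset) (m : ℕ) : Prop :=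
  m ≤ I.n ∧ ∀ a b, I.rel a b → b ≤ m → a ≤ m

theorem IsLowerPrefix.lt_of_decConn {I : IntervalPoset} {m x y : ℕ} (hm : I.IsLowerPrefix m)
    (h : decConn I x y) (hx : m < x) : m < y := by
  induction h with
  | refl => exact hx
  | tail _ step ih =>
    rcases step with ⟨hrel, -⟩ | ⟨hrel, hlt⟩
    · by_contra! hle
      have := hm.2 _ _ hrel hle
      omega
    · omega

theorem isLowerPrefix_iff (I : IntervalPoset) (m : ℕ) :
    I.IsLowerPrefix m ↔ m = I.n ∨ (m < I.n ∧ compMin I (m + 1)) := by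
  constructor
  · intro hm
    rcases hm.1.eq_or_lt with h | h
    · exact Or.inl h
    · exact Or.inr ⟨h, by omega, by omega, fun y hy => hm.lt_of_decConn hy (by omega)⟩
  · rintro (rfl | ⟨hlt, -, -, hmin⟩)
    · exact ⟨le_rfl, fun a b hab _ => (I.supp _ _ hab).2.1⟩
    · refine ⟨hlt.le, fun a b hab hbm => ?_⟩
      by_contra! hma
      -- `decCond` turns the decreasing relation `a ⊴ b` into `m + 1 ⊴ b`, so `b < m + 1` lies
      -- in the tree of `m + 1`
      have hrel : I.rel (m + 1) b := by
        rcases (show m + 1 ≤ a by omega).eq_or_lt with h | h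
        · rwa [← h] at hab
        · exact I.decCond b (m + 1) a hab (by omega) h
      have := hmin b (.single (Or.inl ⟨hrel, by omega⟩))
      omega

/-- The relation of the element of `𝔹(I₁, I₂)` in which the root `k₁ + 1` lies above
`k₁ + 1 + j` exactly for `j ≤ m`. -/
def graftRel (I1 I2 : IntervalPoset) (m x y : ℕ) : Prop :=
  (x ≤ I1.n ∧ y ≤ I1.n ∧ I1.rel x y) ∨
  (I1.n + 2 ≤ x ∧ I1.n + 2 ≤ y ∧ I2.rel (x - (I1.n + 1)) (y - (I1.n + 1))) ∨
  (y = I1.n + 1 ∧ 1 ≤ x ∧ x ≤ I1.n + 1 + m)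

noncomputable def graft (I1 I2 : IntervalPoset) (m : ℕ) : IntervalPoset :=
  if hm : I2.IsLowerPrefix m then
  { n := I1.n + I2.n + 1
    rel := graftRel I1 I2 m
    supp := by
      rintro a b (⟨ha, hb, h⟩ | ⟨ha, hb, h⟩ | ⟨hb, ha1, ha2⟩)
      · have := I1.supp _ _ h; omega
      · have := I2.supp _ _ h; omega
      · have := hm.1; omega
    refl := by
      intro a h1 h2
      rcases (show a ≤ I1.n ∨ a = I1.n + 1 ∨ I1.n + 2 ≤ a by omega) with h | h | h
      · exact Or.inl ⟨h, h, I1.refl a h1 h⟩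
      · exact Or.inr (Or.inr ⟨h, h1, by omega⟩)
      · exact Or.inr (Or.inl ⟨h, h, I2.refl _ (by omega) (by omega)⟩)
    antisymm := by
      rintro a b (⟨ha, hb, h⟩ | ⟨ha, hb, h⟩ | ⟨hb, ha1, ha2⟩)
        <;> rintro (⟨ha', hb', h'⟩ | ⟨ha', hb', h'⟩ | ⟨hb', ha1', ha2'⟩)
      all_goals try omega
      · exact I1.antisymm _ _ h h'
      · have := I2.antisymm _ _ h h'; omega
    trans := by
      rintro a b c (⟨ha, hb, h⟩ | ⟨ha, hb, h⟩ | ⟨hb, ha1, ha2⟩)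
        <;> rintro (⟨hb', hc', h'⟩ | ⟨hb', hc', h'⟩ | ⟨hc', hb1', hb2'⟩)
      all_goals try omega
      · exact Or.inl ⟨ha, hc', I1.trans _ _ _ h h'⟩
      · exact Or.inr (Or.inr ⟨hc', (I1.supp _ _ h).1, by omega⟩)
      · exact Or.inr (Or.inl ⟨ha, hc', I2.trans _ _ _ h h'⟩)
      · -- `a ⊴ b ⊴ k₁ + 1` with `b` in the prefix: being a lower set, the prefix contains `a`
        have := hm.2 _ _ h (by omega)
        exact Or.inr (Or.inr ⟨hc', by omega, by omega⟩)
      · exact Or.inr (Or.inr ⟨hc', ha1, ha2⟩)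
    incCond := by
      rintro a b c (⟨ha, hc, h⟩ | ⟨ha, hc, h⟩ | ⟨hc, ha1, ha2⟩) hab hbc
      · exact Or.inl ⟨by omega, hc, I1.incCond _ _ _ h (by omega) (by omega)⟩
      · exact Or.inr (Or.inl ⟨by omega, hc, I2.incCond _ _ _ h (by omega) (by omega)⟩)
      · exact Or.inr (Or.inr ⟨hc, by omega, by omega⟩)
    decCond := by
      rintro a b c (⟨hc, ha, h⟩ | ⟨hc, ha, h⟩ | ⟨ha, hc1, hc2⟩) hab hbc
      · exact Or.inl ⟨by omega, ha, I1.decCond _ _ _ h (by omega) (by omega)⟩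
      · exact Or.inr (Or.inl ⟨by omega, ha, I2.decCond _ _ _ h (by omega) (by omega)⟩)
      · exact Or.inr (Or.inr ⟨ha, by omega, by omega⟩) }
  else I1

section Graft

variable {I1 I2 : IntervalPoset} {m x y : ℕ}

theorem graft_n (hm : I2.IsLowerPrefix m) : (graft I1 I2 m).n = I1.n + I2.n + 1 := by
  rw [graft, dif_pos hm]

theorem graft_rel (hm : I2.IsLowerPrefix m) : (graft I1 I2 m).rel = graftRel I1 I2 m := by
  rw [graft, dif_pos hm]

theorem decBelow_graft_iff (hm : I2.IsLowerPrefix m) :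
    decBelow (graft I1 I2 m) x y ↔
      decBelow I1 x y ∨
      (I1.n + 2 ≤ y ∧ decBelow I2 (x - (I1.n + 1)) (y - (I1.n + 1))) ∨
      (y = I1.n + 1 ∧ I1.n + 1 < x ∧ x ≤ I1.n + 1 + m) := by
  rw [decBelow, graft_rel hm]
  constructor
  · rintro ⟨⟨-, -, h⟩ | ⟨-, hy, h⟩ | ⟨hy, -, hx⟩, hlt⟩
    · exact Or.inl ⟨h, hlt⟩
    · exact Or.inr (Or.inl ⟨hy, h, by omega⟩)
    · exact Or.inr (Or.inr ⟨hy, by omega, hx⟩)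
  · rintro (⟨h, hlt⟩ | ⟨hy, h, hlt⟩ | ⟨hy, h1, h2⟩)
    · have := I1.supp _ _ h
      exact ⟨Or.inl ⟨by omega, by omega, h⟩, hlt⟩
    · have := I2.supp _ _ h
      exact ⟨Or.inr (Or.inl ⟨by omega, hy, h⟩), by omega⟩
    · exact ⟨Or.inr (Or.inr ⟨hy, by omega, h2⟩), by omega⟩

theorem decConn_graft_of_left (hm : I2.IsLowerPrefix m) (h : decConn I1 x y) :
    decConn (graft I1 I2 m) x y :=
  Relation.ReflTransGen.mono (fun _ _ hab => hab.imp (fun h => (decBelow_graft_iff hm).2 (Or.inl h))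
    (fun h => (decBelow_graft_iff hm).2 (Or.inl h))) _ _ h

theorem decBelow_graft_of_right (hm : I2.IsLowerPrefix m) (h : decBelow I2 x y) :
    decBelow (graft I1 I2 m) (x + (I1.n + 1)) (y + (I1.n + 1)) := by
  have := I2.supp _ _ h.1
  refine (decBelow_graft_iff hm).2 (Or.inr (Or.inl ⟨by omega, ?_⟩))
  simpa using h

theorem decConn_graft_of_right (hm : I2.IsLowerPrefix m) (h : decConn I2 x y) :
    decConn (graft I1 I2 m) (x + (I1.n + 1)) (y + (I1.n + 1)) :=
  h.lift (· + (I1.n + 1)) fun _ _ hab =>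
    hab.imp (decBelow_graft_of_right hm) (decBelow_graft_of_right hm)

theorem le_left_iff_of_decBelow_graft (hm : I2.IsLowerPrefix m)
    (h : decBelow (graft I1 I2 m) x y) : x ≤ I1.n ↔ y ≤ I1.n := by
  rcases (decBelow_graft_iff hm).1 h with ⟨h, -⟩ | ⟨hy, h, hlt⟩ | ⟨rfl, hx, -⟩
  · have := I1.supp _ _ h; omega
  · omega
  · omega

theorem le_cut_iff_of_decBelow_graft (hm : I2.IsLowerPrefix m)
    (h : decBelow (graft I1 I2 m) x y) : x ≤ I1.n + 1 + m ↔ y ≤ I1.n + 1 + m := by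
  rcases (decBelow_graft_iff hm).1 h with ⟨h, -⟩ | ⟨hy, h, hlt⟩ | ⟨rfl, hx, hxm⟩
  · have := I1.supp _ _ h; omega
  · have := hm.2 _ _ h
    omega
  · omega

theorem decBelow_left_of_decBelow_graft (hm : I2.IsLowerPrefix m)
    (h : decBelow (graft I1 I2 m) x y) (hx : x ≤ I1.n) : decBelow I1 x y := by
  rcases (decBelow_graft_iff hm).1 h with h | ⟨hy, -, hlt⟩ | ⟨-, hx', -⟩
  · exact h
  · omega
  · omega

theorem decBelow_right_of_decBelow_graft (hm : I2.IsLowerPrefix m)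
    (h : decBelow (graft I1 I2 m) x y) (hx : I1.n + 1 + m < x) :
    decBelow I2 (x - (I1.n + 1)) (y - (I1.n + 1)) := by
  rcases (decBelow_graft_iff hm).1 h with ⟨h, -⟩ | ⟨-, h⟩ | ⟨-, -, hx'⟩
  · have := I1.supp _ _ h; omega
  · exact h
  · omega

theorem decConn_left_of_decConn_graft (hm : I2.IsLowerPrefix m)
    (h : decConn (graft I1 I2 m) x y) (hx : x ≤ I1.n) : y ≤ I1.n ∧ decConn I1 x y :=
  Relation.ReflTransGen.lift_symm_of_invariant (r := decBelow (graft I1 I2 m)) id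
    (fun _ _ hab => le_left_iff_of_decBelow_graft hm hab)
    (fun _ _ hab => decBelow_left_of_decBelow_graft hm hab) h hx

theorem decConn_right_of_decConn_graft (hm : I2.IsLowerPrefix m)
    (h : decConn (graft I1 I2 m) x y) (hx : I1.n + 1 + m < x) :
    I1.n + 1 + m < y ∧ decConn I2 (x - (I1.n + 1)) (y - (I1.n + 1)) :=
  Relation.ReflTransGen.lift_symm_of_invariant (r := decBelow (graft I1 I2 m)) (· - (I1.n + 1))
    (fun _ _ hab => not_le.symm.trans ((le_cut_iff_of_decBelow_graft hm hab).not.trans not_le))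
    (fun _ _ hab => decBelow_right_of_decBelow_graft hm hab) h hx

theorem mem_rootBlock_of_decConn_graft (hm : I2.IsLowerPrefix m)
    (h : decConn (graft I1 I2 m) (I1.n + 1) y) : I1.n + 1 ≤ y ∧ y ≤ I1.n + 1 + m := by
  have key := (Relation.ReflTransGen.lift_symm_of_invariant (r := decBelow (graft I1 I2 m))
    (s := fun _ _ => True) id
    (p := fun z => ¬ z ≤ I1.n ∧ z ≤ I1.n + 1 + m)
    (fun _ _ hab => and_congr (le_left_iff_of_decBelow_graft hm hab).not
      (le_cut_iff_of_decBelow_graft hm hab))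
    (fun _ _ _ _ => trivial) h ⟨by omega, by omega⟩).1
  omega

theorem compMin_graft_iff (hm : I2.IsLowerPrefix m) (r : ℕ) :
    compMin (graft I1 I2 m) r ↔
      compMin I1 r ∨ r = I1.n + 1 ∨ ∃ r', compMin I2 r' ∧ m < r' ∧ r = r' + (I1.n + 1) := by
  constructor
  · rintro ⟨h1, h2, hmin⟩
    rw [graft_n hm] at h2
    rcases (show r ≤ I1.n ∨ r = I1.n + 1 ∨ I1.n + 1 < r ∧ r ≤ I1.n + 1 + m ∨
        I1.n + 1 + m < r by omega) with hr | hr | hr | hr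
    · exact Or.inl ⟨h1, hr, fun y hy => hmin y (decConn_graft_of_left hm hy)⟩
    · exact Or.inr (Or.inl hr)
    · -- `r` hangs directly below the smaller root
      have := hmin _ (.single (Or.inl ((decBelow_graft_iff hm).2 (Or.inr (Or.inr ⟨rfl, hr⟩)))))
      omega
    · refine Or.inr (Or.inr ⟨r - (I1.n + 1), ⟨by omega, by omega, fun y hy => ?_⟩, by omega,
        by omega⟩)
      have hc := decConn_graft_of_right (I1 := I1) hm hy
      rw [Nat.sub_add_cancel (by omega)] at hc
      have := hmin _ hc
      omega
  · rintro (⟨h1, h2, hmin⟩ | rfl | ⟨r', ⟨h1, h2, hmin⟩, hmr, rfl⟩)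
    · exact ⟨h1, by rw [graft_n hm]; omega,
        fun y hy => hmin y (decConn_left_of_decConn_graft hm hy h2).2⟩
    · exact ⟨by omega, by rw [graft_n hm]; omega,
        fun y hy => (mem_rootBlock_of_decConn_graft hm hy).1⟩
    · refine ⟨by omega, by rw [graft_n hm]; omega, fun y hy => ?_⟩
      obtain ⟨hy1, hy2⟩ := decConn_right_of_decConn_graft hm hy (by omega)
      rw [Nat.add_sub_cancel] at hy2
      have := hmin _ hy2
      omega

end Graft

theorem graft_mem_comp {I1 I2 : IntervalPoset} {m : ℕ} (hm : I2.IsLowerPrefix m) :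
    graft I1 I2 m ∈ comp I1 I2 := by
  refine ⟨graft_n hm, fun a b ha1 ha2 hb1 hb2 => ?_, fun a b ha1 ha2 hb1 hb2 => ?_,
    fun i hi1 hi2 => ?_, fun j hj => ?_⟩ <;> rw [graft_rel hm, graftRel]
  · refine ⟨?_, fun h => Or.inl ⟨ha2, hb2, h⟩⟩
    rintro (⟨-, -, h⟩ | ⟨hx, -⟩ | ⟨hy, -⟩)
    · exact h
    all_goals omega
  · rw [show a + I1.n + 1 - (I1.n + 1) = a by omega, show b + I1.n + 1 - (I1.n + 1) = b by omega]
    refine ⟨?_, fun h => Or.inr (Or.inl ⟨by omega, by omega, h⟩)⟩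
    rintro (⟨hx, -⟩ | ⟨-, -, h⟩ | ⟨hy, -⟩)
    · omega
    · exact h
    · omega
  · exact Or.inr (Or.inr ⟨rfl, hi1, by omega⟩)
  · rintro (⟨hx, -⟩ | ⟨-, -, h⟩ | ⟨hy, -⟩)
    · omega
    · have := I2.supp _ _ h; omega
    · omega

section Comp

variable {I1 I2 I : IntervalPoset} {x y : ℕ}

theorem eq_root_of_rel_root (hI : I ∈ comp I1 I2) (h : I.rel (I1.n + 1) y) : y = I1.n + 1 := by
  obtain ⟨-, -, -, hbelow, hnot⟩ := hI
  have := I.supp _ _ h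
  rcases (show y ≤ I1.n ∨ y = I1.n + 1 ∨ I1.n + 1 < y by omega) with hy | hy | hy
  · have := I.antisymm _ _ h (hbelow y (by omega) hy); omega
  · exact hy
  · exact absurd h (hnot y hy)

theorem le_left_iff_of_rel (hI : I ∈ comp I1 I2) (h : I.rel x y) (hy : y ≠ I1.n + 1) :
    x ≤ I1.n ↔ y ≤ I1.n := by
  have hroot : x ≠ I1.n + 1 := fun hx => hy (eq_root_of_rel_root hI (hx ▸ h))
  constructor
  · intro hx
    by_contra! hy'
    exact hI.2.2.2.2 y (by omega) (I.incCond x (I1.n + 1) y h (by omega) (by omega))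
  · intro hy'
    by_contra! hx
    have := eq_root_of_rel_root hI (I.decCond y (I1.n + 1) x h (by omega) (by omega))
    omega

theorem rel_iff_of_le_left (hI : I ∈ comp I1 I2) (hx : x ≤ I1.n) (hy : y ≤ I1.n) :
    I.rel x y ↔ I1.rel x y := by
  by_cases hpos : 1 ≤ x ∧ 1 ≤ y
  · exact hI.2.1 x y hpos.1 hx hpos.2 hy
  · constructor <;> intro h
    · have := I.supp _ _ h; omega
    · have := I1.supp _ _ h; omega

theorem rel_iff_of_right (hI : I ∈ comp I1 I2) (hx : I1.n + 2 ≤ x) (hy : I1.n + 2 ≤ y) :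
    I.rel x y ↔ I2.rel (x - (I1.n + 1)) (y - (I1.n + 1)) := by
  obtain ⟨hn, -, hright, -, -⟩ := hI
  obtain ⟨a, rfl⟩ : ∃ a, x = a + I1.n + 1 := ⟨x - (I1.n + 1), by omega⟩
  obtain ⟨b, rfl⟩ : ∃ b, y = b + I1.n + 1 := ⟨y - (I1.n + 1), by omega⟩
  rw [show a + I1.n + 1 - (I1.n + 1) = a by omega, show b + I1.n + 1 - (I1.n + 1) = b by omega]
  by_cases hb : a ≤ I2.n ∧ b ≤ I2.n
  · exact hright a b (by omega) hb.1 (by omega) hb.2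
  · constructor <;> intro h
    · have := I.supp _ _ h; omega
    · have := I2.supp _ _ h; omega

noncomputable def rootDepth (I1 I2 I : IntervalPoset) : ℕ :=
  Nat.findGreatest (fun j => I.rel (I1.n + 1 + j) (I1.n + 1)) I2.n

theorem rel_root_iff (hI : I ∈ comp I1 I2) :
    I.rel x (I1.n + 1) ↔ 1 ≤ x ∧ x ≤ I1.n + 1 + rootDepth I1 I2 I := by
  obtain ⟨hn, -, -, hbelow, -⟩ := hI
  set m := rootDepth I1 I2 I with hm
  constructor
  · intro h
    have := I.supp _ _ h
    refine ⟨by omega, ?_⟩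
    by_contra! hx
    refine Nat.findGreatest_is_greatest (show m < x - (I1.n + 1) by omega) (by omega) ?_
    rwa [show I1.n + 1 + (x - (I1.n + 1)) = x by omega]
  · rintro ⟨hx1, hx2⟩
    rcases (show x ≤ I1.n ∨ x = I1.n + 1 ∨ I1.n + 1 < x by omega) with hx | rfl | hx
    · exact hbelow x hx1 hx
    · exact I.refl _ hx1 (by omega)
    · -- `k₁ + 1 + m ⊴ k₁ + 1`, and the interval condition fills in everything in between
      have hdeep : I.rel (I1.n + 1 + m) (I1.n + 1) :=
        Nat.findGreatest_of_ne_zero (P := fun j => I.rel (I1.n + 1 + j) (I1.n + 1)) hm.symm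
          (by omega)
      rcases hx2.eq_or_lt with rfl | hlt
      · exact hdeep
      · exact I.decCond _ _ _ hdeep hx hlt

theorem isLowerPrefix_rootDepth (hI : I ∈ comp I1 I2) : I2.IsLowerPrefix (rootDepth I1 I2 I) := by
  refine ⟨Nat.findGreatest_le _, fun a b hab hbm => ?_⟩
  have := I2.supp _ _ hab
  have hrel := (rel_iff_of_right hI (x := a + (I1.n + 1)) (y := b + (I1.n + 1)) (by omega)
    (by omega)).2 (by simpa using hab)
  have hb := (rel_root_iff hI (x := b + (I1.n + 1))).2 ⟨by omega, by omega⟩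
  have := ((rel_root_iff hI).1 (I.trans _ _ _ hrel hb)).2
  omega

theorem eq_graft_of_mem_comp (hI : I ∈ comp I1 I2) : I = graft I1 I2 (rootDepth I1 I2 I) := by
  have hm := isLowerPrefix_rootDepth hI
  refine ext (by rw [graft_n hm, hI.1]) ?_
  ext x y
  rw [graft_rel hm, graftRel]
  rcases (show y ≤ I1.n ∨ y = I1.n + 1 ∨ I1.n + 2 ≤ y by omega) with hy | rfl | hy
  · constructor
    · intro h
      have hx := (le_left_iff_of_rel hI h (by omega)).2 hy
      exact Or.inl ⟨hx, hy, (rel_iff_of_le_left hI hx hy).1 h⟩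
    · rintro (⟨hx, -, h⟩ | ⟨-, hy', -⟩ | ⟨hy', -⟩)
      · exact (rel_iff_of_le_left hI hx hy).2 h
      all_goals omega
  · rw [rel_root_iff hI]
    constructor
    · exact fun h => Or.inr (Or.inr ⟨rfl, h⟩)
    · rintro (⟨-, hy, -⟩ | ⟨-, hy, -⟩ | ⟨-, h⟩)
      · omega
      · omega
      · exact h
  · constructor
    · intro h
      have hx : ¬ x ≤ I1.n := (le_left_iff_of_rel hI h (by omega)).not.2 (by omega)
      have hx' : x ≠ I1.n + 1 := fun hx' => by have := eq_root_of_rel_root hI (hx' ▸ h); omega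
      exact Or.inr (Or.inl ⟨by omega, hy, (rel_iff_of_right hI (by omega) hy).1 h⟩)
    · rintro (⟨-, hy', -⟩ | ⟨hx, -, h⟩ | ⟨hy', -⟩)
      · omega
      · exact (rel_iff_of_right hI hx hy).2 h
      · omega

end Comp

theorem graft_injOn {I1 I2 : IntervalPoset} : Set.InjOn (graft I1 I2) {m | I2.IsLowerPrefix m} := by
  -- the root `k₁ + 1` lies above `k₁ + 1 + m` but not above `k₁ + 2 + m`
  have hle : ∀ a b, graftRel I1 I2 a = graftRel I1 I2 b → b ≤ a := by
    intro a b h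
    have : graftRel I1 I2 a (I1.n + 1 + b) (I1.n + 1) := h ▸ Or.inr (Or.inr ⟨rfl, by omega, le_rfl⟩)
    rcases this with ⟨h1, -⟩ | ⟨-, h2, -⟩ | ⟨-, -, h3⟩ <;> omega
  intro a ha b hb hab
  have hrel : graftRel I1 I2 a = graftRel I1 I2 b := by
    rw [← graft_rel ha, ← graft_rel hb, hab]
  exact le_antisymm (hle _ _ hrel.symm) (hle _ _ hrel)


theorem comp_eq_image_graft (I1 I2 : IntervalPoset) :
    comp I1 I2 = graft I1 I2 '' {m | I2.IsLowerPrefix m} := by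
  ext I
  constructor
  · exact fun hI => ⟨_, isLowerPrefix_rootDepth hI, (eq_graft_of_mem_comp hI).symm⟩
  · rintro ⟨m, hm, rfl⟩
    exact graft_mem_comp hm

noncomputable def compMins (I : IntervalPoset) : Finset ℕ :=
  (Finset.Icc 1 I.n).filter (compMin I)

theorem mem_compMins {I : IntervalPoset} {r : ℕ} : r ∈ I.compMins ↔ compMin I r := by
  rw [compMins, Finset.mem_filter, Finset.mem_Icc]
  exact ⟨fun h => h.2, fun h => ⟨⟨h.1, h.2.1⟩, h⟩⟩

theorem trees_eq_card_compMins (I : IntervalPoset) : trees I = I.compMins.card := by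
  rw [trees, ← Set.ncard_coe_finset]
  congr
  ext r
  simp [mem_compMins]

noncomputable def treesAbove (I : IntervalPoset) (m : ℕ) : ℕ :=
  (I.compMins.filter (m < ·)).card

theorem compMins_graft {I1 I2 : IntervalPoset} {m : ℕ} (hm : I2.IsLowerPrefix m) :
    (graft I1 I2 m).compMins = (I1.compMins ∪ {I1.n + 1}) ∪
      (I2.compMins.filter (m < ·)).map (addRightEmbedding (I1.n + 1)) := by
  ext r
  simp only [mem_compMins, compMin_graft_iff hm, Finset.mem_union, Finset.mem_singleton,
    Finset.mem_map, Finset.mem_filter, addRightEmbedding_apply]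
  constructor
  · rintro (h | h | ⟨r', h, hmr, rfl⟩)
    · exact Or.inl (Or.inl h)
    · exact Or.inl (Or.inr h)
    · exact Or.inr ⟨r', ⟨h, hmr⟩, rfl⟩
  · rintro ((h | h) | ⟨r', ⟨h, hmr⟩, rfl⟩)
    · exact Or.inl h
    · exact Or.inr (Or.inl h)
    · exact Or.inr (Or.inr ⟨r', h, hmr, rfl⟩)

theorem trees_graft {I1 I2 : IntervalPoset} {m : ℕ} (hm : I2.IsLowerPrefix m) :
    trees (graft I1 I2 m) = trees I1 + 1 + I2.treesAbove m := by
  have hle : ∀ r ∈ I1.compMins, r ≤ I1.n := fun r hr => (mem_compMins.1 hr).2.1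
  rw [trees_eq_card_compMins, compMins_graft hm, Finset.card_union_of_disjoint,
    Finset.card_union_of_disjoint, Finset.card_singleton, Finset.card_map,
    trees_eq_card_compMins, treesAbove]
  · exact Finset.disjoint_singleton_right.2 fun h => by have := hle _ h; omega
  · simp only [Finset.disjoint_left, Finset.mem_union, Finset.mem_singleton, Finset.mem_map,
      addRightEmbedding_apply, not_exists, not_and]
    rintro _ (h | rfl) r' hr' hr
    · have := hle _ h; omega
    · have := (mem_compMins.1 (Finset.mem_filter.1 hr').1).1; omega

noncomputable def lowerPrefixes (I : IntervalPoset) : Finset ℕ :=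
  (Finset.range (I.n + 1)).filter I.IsLowerPrefix

theorem mem_lowerPrefixes {I : IntervalPoset} {m : ℕ} :
    m ∈ I.lowerPrefixes ↔ I.IsLowerPrefix m := by
  rw [lowerPrefixes, Finset.mem_filter, Finset.mem_range]
  exact ⟨fun h => h.2, fun h => ⟨Nat.lt_succ_of_le h.1, h⟩⟩

theorem coe_lowerPrefixes (I : IntervalPoset) :
    (I.lowerPrefixes : Set ℕ) = {m | I.IsLowerPrefix m} :=
  Set.ext fun _ => mem_lowerPrefixes

theorem lowerPrefixes_eq (I : IntervalPoset) :
    I.lowerPrefixes = insert I.n (I.compMins.image (· - 1)) := by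
  ext m
  rw [mem_lowerPrefixes, isLowerPrefix_iff,
    Finset.mem_insert, Finset.mem_image]
  refine or_congr Iff.rfl ⟨fun ⟨hlt, hmin⟩ => ⟨m + 1, mem_compMins.2 hmin, rfl⟩, ?_⟩
  rintro ⟨r, hr, rfl⟩
  obtain ⟨h1, h2, -⟩ := mem_compMins.1 hr
  rw [Nat.sub_add_cancel h1]
  exact ⟨by omega, mem_compMins.1 hr⟩

theorem card_lowerPrefixes (I : IntervalPoset) : I.lowerPrefixes.card = trees I + 1 := by
  have hpos : ∀ r ∈ I.compMins, 1 ≤ r ∧ r ≤ I.n := fun r hr =>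
    ⟨(mem_compMins.1 hr).1, (mem_compMins.1 hr).2.1⟩
  rw [lowerPrefixes_eq, Finset.card_insert_of_notMem, Finset.card_image_of_injOn,
    trees_eq_card_compMins]
  · intro a ha b hb hab
    have := hpos a ha
    have := hpos b hb
    simp only at hab
    omega
  · rintro hn
    obtain ⟨r, hr, hrn⟩ := Finset.mem_image.1 hn
    have := hpos r hr
    omega

theorem treesAbove_strictAntiOn (I : IntervalPoset) :
    StrictAntiOn I.treesAbove {m | I.IsLowerPrefix m} := by
  intro a ha b hb hab
  apply Finset.card_lt_card
  refine Finset.ssubset_iff_of_subset (Finset.monotone_filter_right _ fun _ _ h => hab.trans h)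
    |>.2 ⟨a + 1, ?_, fun h => by have := (Finset.mem_filter.1 h).2; omega⟩
  -- `a` is a proper lower prefix, so `a + 1` starts a tree
  have hmin := ((isLowerPrefix_iff I a).1 ha).resolve_left (by have := hb.1; omega)
  exact Finset.mem_filter.2 ⟨mem_compMins.2 hmin.2, by omega⟩

theorem treesAbove_injOn (I : IntervalPoset) : Set.InjOn I.treesAbove I.lowerPrefixes := by
  rw [coe_lowerPrefixes]
  exact I.treesAbove_strictAntiOn.injOn

theorem image_treesAbove_lowerPrefixes (I : IntervalPoset) :
    I.lowerPrefixes.image I.treesAbove = Finset.range (trees I + 1) := by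
  refine Finset.eq_of_subset_of_card_le (fun i hi => ?_) ?_
  · obtain ⟨m, -, rfl⟩ := Finset.mem_image.1 hi
    rw [Finset.mem_range, Nat.lt_succ_iff, trees_eq_card_compMins]
    exact Finset.card_filter_le _ _
  · rw [Finset.card_range, Finset.card_image_of_injOn I.treesAbove_injOn, card_lowerPrefixes]

end IntervalPoset

/-- `Σ_{I ∈ 𝔹(I1,I2)} x^{trees I} = x^{trees I1 + 1} · (1 + x + ⋯ + x^{trees I2})`. -/
theorem stmt7 (I1 I2 : IntervalPoset) :
    (comp I1 I2).Finite ∧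
    ∑ᶠ I ∈ comp I1 I2, (Polynomial.X : Polynomial ℤ) ^ trees I =
      Polynomial.X ^ (trees I1 + 1) *
        ∑ i ∈ Finset.range (trees I2 + 1), (Polynomial.X : Polynomial ℤ) ^ i := by
  rw [IntervalPoset.comp_eq_image_graft, ← IntervalPoset.coe_lowerPrefixes]
  refine ⟨I2.lowerPrefixes.finite_toSet.image _, ?_⟩
  rw [finsum_mem_image (I2.coe_lowerPrefixes ▸ IntervalPoset.graft_injOn), finsum_mem_coe_finset]
  calc ∑ m ∈ I2.lowerPrefixes, (Polynomial.X : Polynomial ℤ) ^ trees (I1.graft I2 m)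
      = ∑ m ∈ I2.lowerPrefixes, Polynomial.X ^ (trees I1 + 1) * Polynomial.X ^ I2.treesAbove m :=
        Finset.sum_congr rfl fun m hm => by
          rw [IntervalPoset.trees_graft (IntervalPoset.mem_lowerPrefixes.1 hm), pow_add]
    _ = Polynomial.X ^ (trees I1 + 1) *
          ∑ i ∈ I2.lowerPrefixes.image I2.treesAbove, Polynomial.X ^ i := by
        rw [Finset.mul_sum, Finset.sum_image I2.treesAbove_injOn]
    _ = _ := by rw [I2.image_treesAbove_lowerPrefixes]
end

section
/- Let T be a nonempty binary tree of size n with left subtree T_L and right subtree T_R, and for a binary tree U let S_U be the set of interval-posets P_{[U',U]} of Tamari intervals whose upper tree is U (i.e., over all U' ≤ U). Then S_T is the disjoint union of the sets 𝔹(I_L,I_R) over all pairs I_L ∈ S_{T_L} and I_R ∈ S_{T_R}. -/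
/-- Planar binary trees: empty, or a node with a left and a right subtree. -/
inductive BinTree : Type where
  | leaf : BinTree
  | node : BinTree → BinTree → BinTree
  deriving DecidableEq

namespace BinTree

/-- Size: number of internal nodes. -/
def size : BinTree → ℕ
  | leaf => 0
  | node l r => l.size + r.size + 1

/-- `sub T o a b` : in the binary-search-tree labelling of `T` shifted by `o`
(its labels are `o+1, …, o+T.size`), the node labelled `a` lies in the subtree
rooted at the node labelled `b`, i.e. `a ⊴_T b`. -/
def sub : BinTree → ℕ → ℕ → ℕ → Prop
  | leaf, _, _, _ => False
  | node l r, o, a, b =>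
      (b = o + l.size + 1 ∧ o + 1 ≤ a ∧ a ≤ o + l.size + r.size + 1) ∨
      l.sub o a b ∨ r.sub (o + l.size + 1) a b

/-- One right rotation, applied at any position of the tree. -/
inductive Rot : BinTree → BinTree → Prop
  | base (A B C : BinTree) : Rot (node (node A B) C) (node A (node B C))
  | left {l l' : BinTree} (r : BinTree) : Rot l l' → Rot (node l r) (node l' r)
  | right (l : BinTree) {r r' : BinTree} : Rot r r' → Rot (node l r) (node l r')

end BinTree

/-- Tamari order: reflexive-transitive closure of right rotation. -/
def tamariLE : BinTree → BinTree → Prop := Relation.ReflTransGen BinTree.Rot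

/-- `incRel T a c` : `a` is below `c` in the initial forest `inc T`. -/
def incRel (T : BinTree) (a c : ℕ) : Prop := a < c ∧ T.sub 0 a c

/-- `decRel T c a` : `c` is below `a` in the final forest `dec T`. -/
def decRel (T : BinTree) (c a : ℕ) : Prop := a < c ∧ T.sub 0 c a

/-- The partial order on `{1, …, n}` generated by a family `r` of relations. -/
def genClos (n : ℕ) (r : ℕ → ℕ → Prop) : ℕ → ℕ → Prop :=
  fun a b => (a = b ∧ 1 ≤ a ∧ a ≤ n) ∨ Relation.TransGen r a b

/-- The relation of the interval-poset `P_{[T1,T2]}` of a Tamari interval: the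
partial order on `{1, …, n}` generated by the relations of `dec T1` together
with those of `inc T2`. -/
def pairRel (n : ℕ) (T1 T2 : BinTree) : ℕ → ℕ → Prop :=
  genClos n (fun x y => decRel T1 x y ∨ incRel T2 x y)

/-- `S_U` : the interval-posets of Tamari intervals with upper tree `U`. -/
def upperSet (U : BinTree) : Set IntervalPoset :=
  {P | P.n = U.size ∧ ∃ U' : BinTree, U'.size = U.size ∧ tamariLE U' U ∧
    P.rel = pairRel U.size U' U}

/-!
Write `T = node TL TR`, and let `graft X R` put `X` at the leftmost leaf of `R`. A tree lies below
`T` in the Tamari order iff it is `graft (node L W) R` with `L ≤ TL` and `graft W R ≤ TR`. For such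
a lower tree the generators of `P_{[graft (node L W) R, T]}` are those of `P_{[L, TL]}`, those of
`P_{[graft W R, TR]}` shifted by `|TL| + 1`, and the root `|TL| + 1` above `1, …, |TL| + 1 + |W|`;
so the interval-poset restricts to members of `S_{TL}` and `S_{TR}` on the two blocks and lies in
their composition. Conversely, in `I ∈ 𝔹(P_{[L, TL]}, P_{[R, TR]})` the right-block elements below
the root form an initial segment `|TL| + 2, …, |TL| + 1 + k` by axiom (ii). As `dec R` is part of
`P_{[R, TR]}`, the labels `1, …, k` are closed under taking descendants in `R`, which forces
`R = graft W R'` with `|W| = k`, and then `I = P_{[graft (node L W) R', T]}`. Disjointness holds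
because `IL` and `IR` are the restrictions of any `I ∈ 𝔹(IL, IR)` to the two blocks.
-/
namespace BinTree

lemma Rot.size_eq {t t' : BinTree} (h : Rot t t') : t.size = t'.size := by
  induction h with
  | base => simp only [size]; omega
  | left _ _ ih => simp only [size, ih]
  | right _ _ ih => simp only [size, ih]

def graft (X : BinTree) : BinTree → BinTree
  | leaf => X
  | node l r => node (graft X l) r

lemma size_graft (X R : BinTree) : (graft X R).size = X.size + R.size := by
  induction R with
  | leaf => simp [graft, size]
  | node l r ih => simp only [graft, size, ih]; omega

lemma sub_bounds {T : BinTree} {o a b : ℕ} (h : T.sub o a b) :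
    o + 1 ≤ a ∧ a ≤ o + T.size ∧ o + 1 ≤ b ∧ b ≤ o + T.size := by
  induction T generalizing o with
  | leaf => exact h.elim
  | node l r ihl ihr =>
    simp only [size]
    rcases h with h | h | h
    · omega
    · have := ihl h; omega
    · have := ihr h; omega

lemma sub_add_iff (T : BinTree) (o s a b : ℕ) :
    T.sub (o + s) (a + s) (b + s) ↔ T.sub o a b := by
  induction T generalizing o with
  | leaf => rfl
  | node l r ihl ihr =>
    have hr := ihr (o + l.size + 1)
    rw [show o + l.size + 1 + s = o + s + l.size + 1 by omega] at hr
    simp only [sub, ihl, hr]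
    exact or_congr (by omega) Iff.rfl

lemma sub_sub_iff (T : BinTree) {o s a b : ℕ} (ha : s ≤ a) (hb : s ≤ b) :
    T.sub o (a - s) (b - s) ↔ T.sub (o + s) a b := by
  rw [← sub_add_iff T o s, Nat.sub_add_cancel ha, Nat.sub_add_cancel hb]

lemma sub_graft_iff_left {X : BinTree} (R : BinTree) {o a b : ℕ} (hb : b ≤ o + X.size) :
    (graft X R).sub o a b ↔ X.sub o a b := by
  induction R with
  | leaf => rfl
  | node l r ih =>
    have hl := size_graft X l
    simp only [graft, sub, ih]
    constructor
    · rintro (h | h | h)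
      · omega
      · exact h
      · have := sub_bounds h; omega
    · exact fun h => Or.inr (Or.inl h)

lemma sub_graft_iff_right (X : BinTree) {R : BinTree} {o a b : ℕ} (ha : o + X.size < a) :
    (graft X R).sub o a b ↔ R.sub (o + X.size) a b := by
  induction R generalizing o with
  | leaf =>
    simp only [graft, sub, iff_false]
    intro h
    have := sub_bounds h; omega
  | node l r ih =>
    have hl := size_graft X l
    simp only [graft, sub, ih ha, show o + (graft X l).size = o + X.size + l.size by omega]
    exact or_congr (by omega) Iff.rfl

lemma exists_eq_graft_of_closed {R : BinTree} {k : ℕ} (hk : k ≤ R.size)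
    (hcl : ∀ a b, b ≤ k → R.sub 0 a b → a ≤ k) : ∃ W R', R = graft W R' ∧ W.size = k := by
  induction R generalizing k with
  | leaf => exact ⟨leaf, leaf, rfl, (Nat.le_zero.1 hk).symm⟩
  | node l r ih =>
    rcases eq_or_lt_of_le hk with rfl | hlt
    · exact ⟨node l r, leaf, rfl, rfl⟩
    have hkl : k ≤ l.size := by
      by_contra! hgt
      have hsize : (node l r).size = l.size + r.size + 1 := rfl
      have := hcl (node l r).size (l.size + 1) (by omega)
        (Or.inl ⟨by omega, by omega, by omega⟩)
      omega
    obtain ⟨W, R', rfl, hW⟩ := ih hkl fun a b hb h => hcl a b hb (Or.inr (Or.inl h))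
    exact ⟨W, node R' r, rfl, hW⟩

end BinTree

open BinTree

lemma tamariLE.size_eq {T T' : BinTree} (h : tamariLE T T') : T.size = T'.size := by
  induction h with
  | refl => rfl
  | tail _ h ih => exact ih.trans h.size_eq

lemma tamariLE_node {l l' r r' : BinTree} (hl : tamariLE l l') (hr : tamariLE r r') :
    tamariLE (node l r) (node l' r') :=
  (hl.lift (node · r) fun _ _ => Rot.left r).trans (hr.lift (node l' ·) fun _ _ => Rot.right l')

lemma tamariLE_graft_node (X W R : BinTree) :
    tamariLE (graft (node X W) R) (node X (graft W R)) := by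
  induction R with
  | leaf => exact .refl
  | node l r ih => exact (tamariLE_node ih .refl).tail (Rot.base X (graft W l) r)

lemma exists_graft_of_rot_graft {L W R Y : BinTree} (h : Rot Y (graft (node L W) R)) :
    ∃ L' W' R', Y = graft (node L' W') R' ∧ tamariLE L' L ∧
      tamariLE (graft W' R') (graft W R) := by
  induction R generalizing Y with
  | leaf =>
    cases h with
    | base A B C => exact ⟨L, B, node leaf C, rfl, .refl, .refl⟩
    | left r h => exact ⟨_, W, leaf, rfl, .single h, .refl⟩
    | right l h => exact ⟨L, _, leaf, rfl, .refl, .single h⟩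
  | node l r ih =>
    cases h with
    | base A B C => exact ⟨L, W, node (node l B) C, rfl, .refl, .single (Rot.base _ _ _)⟩
    | left r h =>
      obtain ⟨L', W', R', rfl, hL, hW⟩ := ih h
      exact ⟨L', W', node R' r, rfl, hL, tamariLE_node hW .refl⟩
    | right l h => exact ⟨L, W, node l _, rfl, .refl, tamariLE_node .refl (.single h)⟩

lemma tamariLE_node_iff {T TL TR : BinTree} :
    tamariLE T (node TL TR) ↔
      ∃ L W R, T = graft (node L W) R ∧ tamariLE L TL ∧ tamariLE (graft W R) TR := by
  constructor
  · intro h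
    induction h using Relation.ReflTransGen.head_induction_on with
    | refl => exact ⟨TL, TR, leaf, rfl, .refl, .refl⟩
    | head hrot _ ih =>
      obtain ⟨L, W, R, rfl, hL, hW⟩ := ih
      obtain ⟨L', W', R', rfl, hL', hW'⟩ := exists_graft_of_rot_graft hrot
      exact ⟨L', W', R', rfl, hL'.trans hL, hW'.trans hW⟩
  · rintro ⟨L, W, R, rfl, hL, hW⟩
    exact (tamariLE_graft_node L W R).trans (tamariLE_node hL hW)

lemma Relation.map_add_add_iff {r : ℕ → ℕ → Prop} {s a b : ℕ} :
    Relation.Map r (· + s) (· + s) a b ↔ s ≤ a ∧ s ≤ b ∧ r (a - s) (b - s) := by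
  constructor
  · rintro ⟨a', b', h, rfl, rfl⟩
    simpa using h
  · rintro ⟨ha, hb, h⟩
    exact ⟨a - s, b - s, h, Nat.sub_add_cancel ha, Nat.sub_add_cancel hb⟩

lemma incRel_node (L R : BinTree) (a b : ℕ) :
    incRel (node L R) a b ↔ incRel L a b ∨
      Relation.Map (incRel R) (· + (L.size + 1)) (· + (L.size + 1)) a b ∨
      (b = L.size + 1 ∧ 1 ≤ a ∧ a < b) := by
  simp only [incRel, sub, Relation.map_add_add_iff, zero_add]
  constructor
  · rintro ⟨hab, h | h | h⟩
    · exact Or.inr (Or.inr (by omega))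
    · exact Or.inl ⟨hab, h⟩
    · have := sub_bounds h
      refine Or.inr (Or.inl ⟨by omega, by omega, by omega, ?_⟩)
      rwa [sub_sub_iff R (by omega) (by omega), zero_add]
  · rintro (⟨hab, h⟩ | ⟨ha, hb, hab, h⟩ | h)
    · exact ⟨hab, Or.inr (Or.inl h)⟩
    · rw [sub_sub_iff R ha hb, zero_add] at h
      exact ⟨by omega, Or.inr (Or.inr h)⟩
    · exact ⟨by omega, Or.inl (by omega)⟩

lemma decRel_graft_node (L W R : BinTree) (a b : ℕ) :
    decRel (graft (node L W) R) a b ↔ decRel L a b ∨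
      Relation.Map (decRel (graft W R)) (· + (L.size + 1)) (· + (L.size + 1)) a b ∨
      (b = L.size + 1 ∧ b < a ∧ a ≤ L.size + 1 + W.size) := by
  simp only [decRel, Relation.map_add_add_iff]
  by_cases hb : b ≤ L.size + W.size + 1
  · rw [sub_graft_iff_left R (by simp only [size]; omega),
      sub_graft_iff_left R (by omega)]
    simp only [sub, zero_add]
    constructor
    · rintro ⟨hab, h | h | h⟩
      · exact Or.inr (Or.inr (by omega))
      · exact Or.inl ⟨hab, h⟩
      · have := sub_bounds h
        refine Or.inr (Or.inl ⟨by omega, by omega, by omega, ?_⟩)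
        rwa [sub_sub_iff W (by omega) (by omega), zero_add]
    · rintro (⟨hab, h⟩ | ⟨ha, hb, hab, h⟩ | h)
      · exact ⟨hab, Or.inr (Or.inl h)⟩
      · rw [sub_sub_iff W ha hb, zero_add] at h
        exact ⟨by omega, Or.inr (Or.inr h)⟩
      · exact ⟨by omega, Or.inl (by omega)⟩
  · have hm : 0 + (node L W).size = 0 + W.size + (L.size + 1) := by simp only [size]; omega
    constructor
    · rintro ⟨hab, h⟩
      rw [sub_graft_iff_right _ (by omega), hm] at h
      refine Or.inr (Or.inl ⟨by omega, by omega, by omega, ?_⟩)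
      rwa [sub_graft_iff_right _ (by omega), sub_sub_iff R (by omega) (by omega)]
    · rintro (⟨hab, h⟩ | ⟨ha, hb', hab, h⟩ | h)
      · have := sub_bounds h; omega
      · rw [sub_graft_iff_right _ (by omega), sub_sub_iff R ha hb', ← hm,
          ← sub_graft_iff_right _ (by omega)] at h
        exact ⟨by omega, h⟩
      · omega

section genClos

variable {n : ℕ} {r : ℕ → ℕ → Prop} {a b : ℕ}

lemma genClos_refl (h1 : 1 ≤ a) (h2 : a ≤ n) : genClos n r a a := Or.inl ⟨rfl, h1, h2⟩

lemma genClos_of_rel (h : r a b) : genClos n r a b := Or.inr (.single h)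

lemma genClos_trans {c : ℕ} (hab : genClos n r a b) (hbc : genClos n r b c) :
    genClos n r a c := by
  rcases hab with ⟨rfl, -⟩ | hab
  · exact hbc
  rcases hbc with ⟨rfl, -⟩ | hbc
  · exact Or.inr hab
  · exact Or.inr (hab.trans hbc)

lemma genClos_induction {Φ : ℕ → ℕ → Prop} (refl : ∀ a, 1 ≤ a → a ≤ n → Φ a a)
    (rel : ∀ a b, r a b → Φ a b) (trans : ∀ a b c, Φ a b → Φ b c → Φ a c)
    (h : genClos n r a b) : Φ a b := by
  rcases h with ⟨rfl, h1, h2⟩ | h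
  · exact refl a h1 h2
  · induction h with
    | single h => exact rel _ _ h
    | tail _ h ih => exact trans _ _ _ ih (rel _ _ h)

lemma genClos_bounds (hr : ∀ x y, r x y → 1 ≤ x ∧ x ≤ n ∧ 1 ≤ y ∧ y ≤ n)
    (h : genClos n r a b) : 1 ≤ a ∧ a ≤ n ∧ 1 ≤ b ∧ b ≤ n :=
  genClos_induction (fun _ h1 h2 => ⟨h1, h2, h1, h2⟩) hr (fun _ _ _ h h' => by omega) h

lemma genClos_map_add {n' s : ℕ} {r' : ℕ → ℕ → Prop} (hn : n + s ≤ n')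
    (hr : ∀ x y, r x y → r' (x + s) (y + s)) (h : genClos n r a b) :
    genClos n' r' (a + s) (b + s) :=
  genClos_induction (Φ := fun a b => genClos n' r' (a + s) (b + s))
    (fun _ h1 h2 => genClos_refl (by omega) (by omega)) (fun _ _ h => genClos_of_rel (hr _ _ h))
    (fun _ _ _ h h' => genClos_trans h h') h

lemma genClos_mono {n' : ℕ} {r' : ℕ → ℕ → Prop} (hn : n ≤ n') (hr : ∀ x y, r x y → r' x y)
    (h : genClos n r a b) : genClos n' r' a b :=
  genClos_map_add (s := 0) hn hr h

end genClos

/-- The relation of an interval-poset in `𝔹(I₁, I₂)` with `|I₁| = nL`: `rL` on the left block,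
`rR` shifted onto the right block, and the root `nL + 1` above exactly `1, …, nL + 1 + k`. -/
def nodeRel (nL k : ℕ) (rL rR : ℕ → ℕ → Prop) (x y : ℕ) : Prop :=
  rL x y ∨ Relation.Map rR (· + (nL + 1)) (· + (nL + 1)) x y ∨
    (y = nL + 1 ∧ 1 ≤ x ∧ x ≤ nL + 1 + k)

section nodeRel

variable {nL k : ℕ} {rL rR : ℕ → ℕ → Prop}

lemma nodeRel_trans (hL : ∀ x y z, rL x y → rL y z → rL x z)
    (hR : ∀ x y z, rR x y → rR y z → rR x z)
    (hLb : ∀ x y, rL x y → 1 ≤ x ∧ x ≤ nL ∧ 1 ≤ y ∧ y ≤ nL)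
    (hRb : ∀ x y, rR x y → 1 ≤ x ∧ 1 ≤ y) (hcut : ∀ x y, rR x y → y ≤ k → x ≤ k)
    {x y z : ℕ} (hxy : nodeRel nL k rL rR x y) (hyz : nodeRel nL k rL rR y z) :
    nodeRel nL k rL rR x z := by
  rcases hxy with hxy | ⟨x', y', hxy, rfl, rfl⟩ | ⟨rfl, hx⟩
  · have := hLb _ _ hxy
    rcases hyz with hyz | ⟨y', z', hyz, hy, rfl⟩ | ⟨rfl, -⟩
    · exact Or.inl (hL _ _ _ hxy hyz)
    · have := hRb _ _ hyz; beta_reduce at hy; omega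
    · exact Or.inr (Or.inr ⟨rfl, by omega, by omega⟩)
  · have := hRb _ _ hxy
    beta_reduce at *
    rcases hyz with hyz | ⟨y'', z', hyz, hy, rfl⟩ | ⟨rfl, hy⟩
    · have := hLb _ _ hyz; omega
    · obtain rfl : y'' = y' := by simpa using hy
      exact Or.inr (Or.inl ⟨x', z', hR _ _ _ hxy hyz, rfl, rfl⟩)
    · have := hcut _ _ hxy (by omega)
      exact Or.inr (Or.inr ⟨rfl, by omega, by omega⟩)
  · rcases hyz with hyz | ⟨y', z', hyz, hy, rfl⟩ | ⟨rfl, -⟩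
    · have := hLb _ _ hyz; omega
    · have := hRb _ _ hyz; beta_reduce at hy; omega
    · exact Or.inr (Or.inr ⟨rfl, hx⟩)

lemma genClos_eq_nodeRel {nR : ℕ} {g gL gR : ℕ → ℕ → Prop}
    (hg : ∀ x y, g x y ↔ gL x y ∨ Relation.Map gR (· + (nL + 1)) (· + (nL + 1)) x y ∨
      (y = nL + 1 ∧ 1 ≤ x ∧ x ≤ nL + 1 + k ∧ x ≠ y))
    (hLb : ∀ x y, gL x y → 1 ≤ x ∧ x ≤ nL ∧ 1 ≤ y ∧ y ≤ nL)
    (hRb : ∀ x y, gR x y → 1 ≤ x ∧ x ≤ nR ∧ 1 ≤ y ∧ y ≤ nR)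
    (hcut : ∀ x y, gR x y → y ≤ k → x ≤ k) :
    genClos (nL + nR + 1) g = nodeRel nL k (genClos nL gL) (genClos nR gR) := by
  have hcut' : ∀ x y, genClos nR gR x y → y ≤ k → x ≤ k := fun x y =>
    genClos_induction (fun _ _ _ => id) hcut (fun _ _ _ h h' hc => h (h' hc))
  have hRb' : ∀ x y, genClos nR gR x y → 1 ≤ x ∧ 1 ≤ y := fun x y h => by
    have := genClos_bounds hRb h; omega
  have htrans : ∀ a b c, nodeRel nL k (genClos nL gL) (genClos nR gR) a b →
      nodeRel nL k (genClos nL gL) (genClos nR gR) b c →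
      nodeRel nL k (genClos nL gL) (genClos nR gR) a c := fun _ _ _ =>
    nodeRel_trans (rL := genClos nL gL) (rR := genClos nR gR) (fun _ _ _ => genClos_trans)
      (fun _ _ _ => genClos_trans) (fun _ _ => genClos_bounds hLb) hRb' hcut'
  funext x y
  apply propext
  constructor
  · refine genClos_induction (fun a h1 h2 => ?_) (fun a b h => ?_) htrans
    · rcases lt_trichotomy a (nL + 1) with h | rfl | h
      · exact Or.inl (genClos_refl h1 (by omega))
      · exact Or.inr (Or.inr ⟨rfl, h1, by omega⟩)
      · exact Or.inr (Or.inl ⟨a - (nL + 1), a - (nL + 1), genClos_refl (by omega) (by omega),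
          Nat.sub_add_cancel h.le, Nat.sub_add_cancel h.le⟩)
    · rcases (hg a b).1 h with hL | ⟨a', b', hR, rfl, rfl⟩ | ⟨rfl, h1, h2, -⟩
      · exact Or.inl (genClos_of_rel hL)
      · exact Or.inr (Or.inl ⟨a', b', genClos_of_rel hR, rfl, rfl⟩)
      · exact Or.inr (Or.inr ⟨rfl, h1, h2⟩)
  · rintro (h | ⟨x', y', h, rfl, rfl⟩ | ⟨rfl, h1, h2⟩)
    · exact genClos_mono (by omega) (fun a b h => (hg a b).2 (Or.inl h)) h
    · exact genClos_map_add (by omega)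
        (fun a b h => (hg _ _).2 (Or.inr (Or.inl ⟨a, b, h, rfl, rfl⟩))) h
    · rcases eq_or_ne x (nL + 1) with rfl | hx
      · exact genClos_refl h1 (by omega)
      · exact genClos_of_rel ((hg _ _).2 (Or.inr (Or.inr ⟨rfl, h1, h2, hx⟩)))

end nodeRel

lemma pairRel_graft_node {TL TR L W R : BinTree} (hL : L.size = TL.size)
    (hR : (graft W R).size = TR.size) :
    pairRel (node TL TR).size (graft (node L W) R) (node TL TR) =
      nodeRel TL.size W.size (pairRel TL.size L TL) (pairRel TR.size (graft W R) TR) := by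
  refine genClos_eq_nodeRel (fun x y => ?_) ?_ ?_ ?_
  · have hroot : (y = TL.size + 1 ∧ y < x ∧ x ≤ TL.size + 1 + W.size) ∨
        (y = TL.size + 1 ∧ 1 ≤ x ∧ x < y) ↔
        (y = TL.size + 1 ∧ 1 ≤ x ∧ x ≤ TL.size + 1 + W.size ∧ x ≠ y) := by omega
    rw [decRel_graft_node, incRel_node, hL, ← hroot]
    simp only [Relation.map_add_add_iff, and_or_left, or_assoc, or_comm, or_left_comm]
  · rintro x y (⟨-, h⟩ | ⟨-, h⟩) <;> have := sub_bounds h <;> omega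
  · rintro x y (⟨-, h⟩ | ⟨-, h⟩) <;> have := sub_bounds h <;> omega
  · rintro x y (⟨hxy, h⟩ | ⟨hxy, -⟩) hy
    · rw [sub_graft_iff_left R (by omega)] at h
      have := sub_bounds h
      omega
    · omega

lemma pairRel_bounds {n : ℕ} {T₁ T₂ : BinTree} (h₁ : T₁.size = n) (h₂ : T₂.size = n) {a b : ℕ}
    (h : pairRel n T₁ T₂ a b) : 1 ≤ a ∧ a ≤ n ∧ 1 ≤ b ∧ b ≤ n :=
  genClos_bounds (by rintro x y (⟨-, h⟩ | ⟨-, h⟩) <;> have := sub_bounds h <;> omega) h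

namespace IntervalPoset

lemma ext_of_rel_iff {P Q : IntervalPoset} (hn : P.n = Q.n)
    (h : ∀ a b, 1 ≤ a → a ≤ P.n → 1 ≤ b → b ≤ P.n → (P.rel a b ↔ Q.rel a b)) : P = Q := by
  have hrel : P.rel = Q.rel := by
    funext a b
    apply propext
    by_cases hab : 1 ≤ a ∧ a ≤ P.n ∧ 1 ≤ b ∧ b ≤ P.n
    · exact h a b hab.1 hab.2.1 hab.2.2.1 hab.2.2.2
    · constructor
      · intro hr; have := P.supp _ _ hr; omega
      · intro hr; have := Q.supp _ _ hr; omega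
  cases P; cases Q
  cases hn; cases hrel
  rfl

def restrict (P : IntervalPoset) (s m : ℕ) (h : s + m ≤ P.n) : IntervalPoset where
  n := m
  rel a b := 1 ≤ a ∧ a ≤ m ∧ 1 ≤ b ∧ b ≤ m ∧ P.rel (a + s) (b + s)
  supp _ _ h := ⟨h.1, h.2.1, h.2.2.1, h.2.2.2.1⟩
  refl a h1 h2 := ⟨h1, h2, h1, h2, P.refl _ (by omega) (by omega)⟩
  antisymm _ _ h h' := by have := P.antisymm _ _ h.2.2.2.2 h'.2.2.2.2; omega
  trans _ _ _ h h' := ⟨h.1, h.2.1, h'.2.2.1, h'.2.2.2.1, P.trans _ _ _ h.2.2.2.2 h'.2.2.2.2⟩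
  incCond _ _ _ h hab hbc :=
    ⟨by omega, by omega, h.2.2.1, h.2.2.2.1, P.incCond _ _ _ h.2.2.2.2 (by omega) (by omega)⟩
  decCond _ _ _ h hab hbc :=
    ⟨by omega, by omega, h.2.2.1, h.2.2.2.1, P.decCond _ _ _ h.2.2.2.2 (by omega) (by omega)⟩

lemma exists_rel_iff_le_add (P : IntervalPoset) (v : ℕ) :
    ∃ k ≤ P.n - v, ∀ c, v < c → (P.rel c v ↔ c ≤ v + k) := by
  classical
  set k := Nat.findGreatest (fun j => P.rel (v + j) v) (P.n - v) with hk
  refine ⟨k, Nat.findGreatest_le _, fun c hc => ⟨fun h => ?_, fun h => ?_⟩⟩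
  · have := P.supp _ _ h
    by_contra! hck
    exact Nat.findGreatest_is_greatest (show k < c - v by omega) (by omega)
      (by rwa [Nat.add_sub_cancel' hc.le])
  · have hkv : P.rel (v + k) v :=
      Nat.findGreatest_of_ne_zero (P := fun j => P.rel (v + j) v) hk.symm (by omega)
    rcases eq_or_lt_of_le h with rfl | hlt
    · exact hkv
    · exact P.decCond _ _ _ hkv hc hlt

lemma rel_eq_nodeRel_of_mem_comp {I IL IR : IntervalPoset} (hI : I ∈ comp IL IR) {k : ℕ}
    (hk : ∀ c, IL.n + 1 < c → (I.rel c (IL.n + 1) ↔ c ≤ IL.n + 1 + k)) :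
    I.rel = nodeRel IL.n k IL.rel IR.rel := by
  obtain ⟨hn, hL, hR, hbelow, habove⟩ := hI
  funext x y
  apply propext
  constructor
  · intro h
    obtain ⟨hx1, hxn, hy1, hyn⟩ := I.supp _ _ h
    rcases lt_trichotomy y (IL.n + 1) with hy | rfl | hy
    · have hx : x ≤ IL.n := by
        by_contra! hx
        have hroot : I.rel (IL.n + 1) y := by
          rcases eq_or_lt_of_le (show IL.n + 1 ≤ x by omega) with hx | hx
          · rwa [hx]
          · exact I.decCond y (IL.n + 1) x h hy hx
        have := I.antisymm _ _ hroot (hbelow y hy1 (by omega))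
        omega
      exact Or.inl ((hL x y hx1 hx hy1 (by omega)).1 h)
    · refine Or.inr (Or.inr ⟨rfl, hx1, ?_⟩)
      by_contra! hx
      have := (hk x (by omega)).1 h
      omega
    · have hx : IL.n + 1 < x := by
        by_contra! hx
        apply habove y hy
        rcases eq_or_lt_of_le hx with rfl | hx
        · exact h
        · exact I.incCond x (IL.n + 1) y h hx hy
      refine Or.inr (Or.inl ⟨x - (IL.n + 1), y - (IL.n + 1),
        (hR _ _ (by omega) (by omega) (by omega) (by omega)).1 ?_,
        Nat.sub_add_cancel hx.le, Nat.sub_add_cancel hy.le⟩)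
      rwa [show x - (IL.n + 1) + IL.n + 1 = x by omega,
        show y - (IL.n + 1) + IL.n + 1 = y by omega]
  · rintro (h | ⟨x', y', h, rfl, rfl⟩ | ⟨rfl, hx1, hx⟩)
    · have := IL.supp _ _ h
      exact (hL x y (by omega) (by omega) (by omega) (by omega)).2 h
    · have := IR.supp _ _ h
      simpa only [add_assoc] using (hR x' y' (by omega) (by omega) (by omega) (by omega)).2 h
    · rcases lt_trichotomy x (IL.n + 1) with hx' | rfl | hx'
      · exact hbelow x hx1 (by omega)
      · exact I.refl _ hx1 (by omega)
      · exact (hk x hx').2 hx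

section nodeRel

variable {I : IntervalPoset} {nL nR k : ℕ} {rL rR : ℕ → ℕ → Prop}

lemma restrict_left_rel (hrel : I.rel = nodeRel nL k rL rR)
    (hLb : ∀ x y, rL x y → 1 ≤ x ∧ x ≤ nL ∧ 1 ≤ y ∧ y ≤ nL) (h : 0 + nL ≤ I.n) :
    (I.restrict 0 nL h).rel = rL := by
  funext a b
  apply propext
  simp only [restrict, add_zero, hrel]
  constructor
  · rintro ⟨-, ha, -, hb, h | ⟨x', y', -, hx, -⟩ | ⟨rfl, -⟩⟩
    · exact h
    · beta_reduce at hx; omega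
    · omega
  · intro h
    have := hLb _ _ h
    exact ⟨by omega, by omega, by omega, by omega, Or.inl h⟩

lemma restrict_right_rel (hrel : I.rel = nodeRel nL k rL rR)
    (hLb : ∀ x y, rL x y → 1 ≤ x ∧ x ≤ nL ∧ 1 ≤ y ∧ y ≤ nL)
    (hRb : ∀ x y, rR x y → 1 ≤ x ∧ x ≤ nR ∧ 1 ≤ y ∧ y ≤ nR) (h : nL + 1 + nR ≤ I.n) :
    (I.restrict (nL + 1) nR h).rel = rR := by
  funext a b
  apply propext
  simp only [restrict, hrel]
  constructor
  · rintro ⟨-, -, hb, -, h | ⟨x', y', h, hx, hy⟩ | ⟨hb', -⟩⟩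
    · have := hLb _ _ h; omega
    · beta_reduce at hx hy
      obtain rfl : x' = a := by omega
      obtain rfl : y' = b := by omega
      exact h
    · omega
  · intro h
    have := hRb _ _ h
    exact ⟨by omega, by omega, by omega, by omega, Or.inr (Or.inl ⟨a, b, h, rfl, rfl⟩)⟩

lemma mem_comp_restrict (hn : I.n = nL + nR + 1) (hrel : I.rel = nodeRel nL k rL rR)
    (hLb : ∀ x y, rL x y → 1 ≤ x ∧ x ≤ nL ∧ 1 ≤ y ∧ y ≤ nL) (hRb : ∀ x y, rR x y → 1 ≤ x) :
    I ∈ comp (I.restrict 0 nL (by omega)) (I.restrict (nL + 1) nR (by omega)) := by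
  simp only [comp, restrict, Set.mem_ofPred_eq, add_zero, add_assoc]
  refine ⟨hn, fun a b h1 h2 h3 h4 => ?_, fun a b h1 h2 h3 h4 => ?_, fun i h1 h2 => ?_,
    fun j hj h => ?_⟩
  · tauto
  · tauto
  · rw [hrel]
    exact Or.inr (Or.inr ⟨rfl, h1, by omega⟩)
  · rw [hrel] at h
    rcases h with h | ⟨x', y', h, hx, -⟩ | ⟨rfl, -⟩
    · have := hLb _ _ h; omega
    · have := hRb _ _ h; beta_reduce at hx; omega
    · omega

end nodeRel

lemma disjoint_comp {IL IL' IR IR' : IntervalPoset} (hn : IL.n = IL'.n)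
    (hne : IL ≠ IL' ∨ IR ≠ IR') : Disjoint (comp IL IR) (comp IL' IR') := by
  rw [Set.disjoint_left]
  rintro I ⟨hI, hL, hR, -, -⟩ ⟨hI', hL', hR', -, -⟩
  rcases hne with hne | hne
  · refine hne (ext_of_rel_iff hn fun a b h1 h2 h3 h4 => ?_)
    rw [← hL a b h1 h2 h3 h4, ← hL' a b h1 (by omega) h3 (by omega)]
  · refine hne (ext_of_rel_iff (by omega) fun a b h1 h2 h3 h4 => ?_)
    rw [← hR a b h1 h2 h3 h4, ← hR' a b h1 (by omega) h3 (by omega), hn]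

end IntervalPoset

open IntervalPoset

lemma exists_mem_comp_of_mem_upperSet_node {TL TR : BinTree} {P : IntervalPoset}
    (hP : P ∈ upperSet (node TL TR)) :
    ∃ IL ∈ upperSet TL, ∃ IR ∈ upperSet TR, P ∈ comp IL IR := by
  obtain ⟨hn, T, -, hT, hrel⟩ := hP
  obtain ⟨L, W, R, rfl, hL, hW⟩ := tamariLE_node_iff.1 hT
  rw [pairRel_graft_node hL.size_eq hW.size_eq] at hrel
  have hn' : P.n = TL.size + TR.size + 1 := hn
  have hLb := fun x y => pairRel_bounds (a := x) (b := y) hL.size_eq rfl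
  have hRb := fun x y => pairRel_bounds (a := x) (b := y) hW.size_eq rfl
  exact ⟨_, ⟨rfl, L, hL.size_eq, hL, restrict_left_rel hrel hLb _⟩,
    _, ⟨rfl, graft W R, hW.size_eq, hW, restrict_right_rel hrel hLb hRb _⟩,
    mem_comp_restrict hn' hrel hLb fun x y h => (hRb x y h).1⟩

lemma mem_upperSet_node_of_mem_comp {TL TR : BinTree} {IL IR I : IntervalPoset}
    (hIL : IL ∈ upperSet TL) (hIR : IR ∈ upperSet TR) (hI : I ∈ comp IL IR) :
    I ∈ upperSet (node TL TR) := by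
  obtain ⟨hnL, L, hL, hLTL, hrelL⟩ := hIL
  obtain ⟨hnR, R, hR, hRTR, hrelR⟩ := hIR
  obtain ⟨k, hkn, hk⟩ := I.exists_rel_iff_le_add (IL.n + 1)
  have hrel := rel_eq_nodeRel_of_mem_comp hI hk
  have hcl : ∀ a b, b ≤ k → R.sub 0 a b → a ≤ k := by
    intro a b hb hab
    by_contra! ha
    have := sub_bounds hab
    have hdec : IR.rel a b := hrelR ▸ genClos_of_rel (Or.inl ⟨by omega, hab⟩)
    have h1 : I.rel (a + (IL.n + 1)) (b + (IL.n + 1)) := by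
      rw [hrel]; exact Or.inr (Or.inl ⟨a, b, hdec, rfl, rfl⟩)
    have h2 : I.rel (b + (IL.n + 1)) (IL.n + 1) := by
      rw [hrel]; exact Or.inr (Or.inr ⟨rfl, by omega, by omega⟩)
    have := (hk _ (by omega)).1 (I.trans _ _ _ h1 h2)
    omega
  obtain ⟨W, R', rfl, rfl⟩ := exists_eq_graft_of_closed (by have := hI.1; omega) hcl
  refine ⟨by rw [hI.1, hnL, hnR]; rfl, graft (node L W) R', ?_, ?_, ?_⟩
  · simp only [size_graft, size] at hR ⊢
    omega
  · exact tamariLE_node_iff.2 ⟨L, W, R', rfl, hLTL, hRTR⟩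
  · rw [hrel, pairRel_graft_node hL hR, hnL, hrelL, hrelR]

/-- For `T = node TL TR`, `S_T` is the disjoint union of the compositions
`𝔹(IL, IR)` over `IL ∈ S_{TL}` and `IR ∈ S_{TR}`. -/
theorem stmt10 (TL TR : BinTree) :
    (upperSet (BinTree.node TL TR) =
      ⋃ IL ∈ upperSet TL, ⋃ IR ∈ upperSet TR, comp IL IR) ∧
    (∀ IL IL' IR IR', IL ∈ upperSet TL → IL' ∈ upperSet TL →
      IR ∈ upperSet TR → IR' ∈ upperSet TR → (IL ≠ IL' ∨ IR ≠ IR') →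
      Disjoint (comp IL IR) (comp IL' IR')) := by
  refine ⟨Set.ext fun P => ?_, fun IL IL' IR IR' hIL hIL' _ _ hne =>
    disjoint_comp (hIL.1.trans hIL'.1.symm) hne⟩
  simp only [Set.mem_iUnion, exists_prop]
  exact ⟨exists_mem_comp_of_mem_upperSet_node,
    fun ⟨_, hIL, _, hIR, hP⟩ => mem_upperSet_node_of_mem_comp hIL hIR hP⟩
end

section
/- For every binary tree T of size n and every k ≥ 0, the coefficient of x^k in the Tamari polynomial B_T(x) equals the number of binary trees T' with T' ≤ T in the Tamari order whose leftmost branch contains exactly k nodes. In particular, B_T(1) equals the number of binary trees T' with T' ≤ T. -/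
/-- `Δ(g) = (x·g(x) − g(1)) / (x − 1)`, an exact polynomial division. -/
noncomputable def polyDelta (g : Polynomial ℤ) : Polynomial ℤ :=
  Polynomial.divByMonic (Polynomial.X * g - Polynomial.C (g.eval 1))
    (Polynomial.X - Polynomial.C 1)

/-- The Tamari polynomial `B_T`, with `B_∅ = 1` and `B_T = x·B_L·Δ(B_R)`. -/
noncomputable def BT : BinTree → Polynomial ℤ
  | BinTree.leaf => 1
  | BinTree.node l r => Polynomial.X * BT l * polyDelta (BT r)

/-- Number of nodes on the leftmost branch. -/
def leftDepth : BinTree → ℕ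
  | BinTree.leaf => 0
  | BinTree.node l _ => leftDepth l + 1

/-!
The trees `T' ≤ node L R` are exactly the trees obtained from some `L' ≤ L`, `R' ≤ R` and
`i ≤ leftDepth R'` by replacing the subtree `U` at depth `i` of the leftmost branch of `R'`
with `node L' U`: undoing `i` rotations of `node L' R'` along the leftmost branch produces them,
and conversely every rotation into such a tree comes from one of this shape. Distinct triples
give distinct trees, and the tree built from `(L', R', i)` has a leftmost branch of length
`leftDepth L' + 1 + i`. Since `Δ(x^d) = 1 + x + ⋯ + x^d`, the generating polynomial of the
lower set of `T` by leftmost-branch length therefore satisfies the recursion defining `B_T`.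
-/

namespace BinTree

open Polynomial

def graftLeft (S : BinTree) (i : ℕ) (L : BinTree) : BinTree :=
  match i, S with
  | 0, S => node L S
  | _ + 1, leaf => leaf
  | i + 1, node a b => node (graftLeft a i L) b
termination_by structural i

@[simp] lemma graftLeft_zero (S L : BinTree) : graftLeft S 0 L = node L S := rfl

@[simp] lemma graftLeft_succ (a b : BinTree) (i : ℕ) (L : BinTree) :
    graftLeft (node a b) (i + 1) L = node (graftLeft a i L) b := rfl

@[simp] lemma size_leaf : size leaf = 0 := rfl

@[simp] lemma size_node (l r : BinTree) : size (node l r) = size l + size r + 1 := rfl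

@[simp] lemma leftDepth_leaf : leftDepth leaf = 0 := rfl

@[simp] lemma leftDepth_node (l r : BinTree) : leftDepth (node l r) = leftDepth l + 1 := rfl

lemma leftDepth_graftLeft {S : BinTree} {i : ℕ} (L : BinTree) (h : i ≤ leftDepth S) :
    leftDepth (graftLeft S i L) = leftDepth L + 1 + i := by
  induction S generalizing i with
  | leaf =>
    obtain rfl : i = 0 := by simpa using h
    simp
  | node a b ih =>
    cases i with
    | zero => simp
    | succ i => simp [ih (by simpa using h)]; omega

lemma size_graftLeft {S : BinTree} {i : ℕ} (L : BinTree) (h : i ≤ leftDepth S) :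
    size (graftLeft S i L) = size S + size L + 1 := by
  induction S generalizing i with
  | leaf =>
    obtain rfl : i = 0 := by simpa using h
    simp
  | node a b ih =>
    cases i with
    | zero => simp; omega
    | succ i => simp [ih (by simpa using h)]; omega

lemma graftLeft_inj {S S' L L' : BinTree} {i i' : ℕ} (hi : i ≤ leftDepth S)
    (hi' : i' ≤ leftDepth S') (hL : size L = size L')
    (h : graftLeft S i L = graftLeft S' i' L') : i = i' ∧ S = S' ∧ L = L' := by
  induction i generalizing S S' i' with
  | zero =>
    cases i' with
    | zero => simp_all
    | succ i' =>
      obtain _ | ⟨a, b⟩ := S'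
      · simp at hi'
      · simp only [graftLeft_zero, graftLeft_succ, node.injEq] at h
        rw [h.1, size_graftLeft L' (by simpa using hi')] at hL
        omega
  | succ i ih =>
    obtain _ | ⟨a, b⟩ := S
    · simp at hi
    cases i' with
    | zero =>
      simp only [graftLeft_zero, graftLeft_succ, node.injEq] at h
      rw [← h.1, size_graftLeft L (by simpa using hi)] at hL
      omega
    | succ i' =>
      obtain _ | ⟨a', b'⟩ := S'
      · simp at hi'
      simp only [graftLeft_succ, node.injEq] at h
      obtain ⟨rfl, rfl, rfl⟩ := ih (by simpa using hi) (by simpa using hi') h.1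
      simp [h.2]

lemma size_eq_of_rot {T T' : BinTree} (h : Rot T T') : size T = size T' := by
  induction h <;> simp_all; omega

lemma size_eq_of_tamariLE {T T' : BinTree} (h : tamariLE T T') : size T = size T' := by
  induction h with
  | refl => rfl
  | tail _ hr ih => exact ih.trans (size_eq_of_rot hr)

lemma tamariLE_node_left {l l' : BinTree} (r : BinTree) (h : tamariLE l l') :
    tamariLE (node l r) (node l' r) :=
  Relation.ReflTransGen.lift (node · r) (fun _ _ => Rot.left r) _ _ h

lemma tamariLE_node_right (l : BinTree) {r r' : BinTree} (h : tamariLE r r') :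
    tamariLE (node l r) (node l r') :=
  Relation.ReflTransGen.lift (node l ·) (fun _ _ => Rot.right l) _ _ h

lemma rot_graftLeft_succ {S : BinTree} {i : ℕ} (L : BinTree) (h : i + 1 ≤ leftDepth S) :
    Rot (graftLeft S (i + 1) L) (graftLeft S i L) := by
  induction S generalizing i with
  | leaf => simp at h
  | node a b ih =>
    cases i with
    | zero => exact Rot.base L a b
    | succ i => exact Rot.left b (ih (by simpa using h))

lemma graftLeft_tamariLE_node {S : BinTree} {i : ℕ} (L : BinTree) (h : i ≤ leftDepth S) :
    tamariLE (graftLeft S i L) (node L S) := by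
  induction i with
  | zero => simp [tamariLE, Relation.ReflTransGen.refl]
  | succ i ih => exact .head (rot_graftLeft_succ L h) (ih (by omega))

/-- A rotation into a grafted tree is a rotation inside `S` or `L`, or moves the grafting point. -/
lemma exists_graftLeft_of_rot {S L T₀ : BinTree} {i : ℕ} (hi : i ≤ leftDepth S)
    (h : Rot T₀ (graftLeft S i L)) :
    ∃ S' i' L', i' ≤ leftDepth S' ∧ T₀ = graftLeft S' i' L' ∧
      Relation.ReflGen Rot S' S ∧ Relation.ReflGen Rot L' L := by
  induction S generalizing i T₀ with
  | leaf =>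
    obtain rfl : i = 0 := by simpa using hi
    rw [graftLeft_zero] at h
    cases h with
    | left _ hL => exact ⟨leaf, 0, _, le_rfl, by simp, .refl, .single hL⟩
    | right _ hR => cases hR
  | node a b iha _ =>
    cases i with
    | zero =>
      rw [graftLeft_zero] at h
      cases h with
      | base => exact ⟨node a b, 1, L, by simp, rfl, .refl, .refl⟩
      | left _ hL => exact ⟨node a b, 0, _, by simp, by simp, .refl, .single hL⟩
      | right _ hR => exact ⟨_, 0, L, by simp, by simp, .single hR, .refl⟩
    | succ i =>
      rw [graftLeft_succ] at h
      cases h with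
      | base A B C => exact ⟨node (node a B) C, i + 2, L, by simpa using hi, rfl,
          .single (Rot.base a B C), .refl⟩
      | left _ hl =>
        obtain ⟨a', i', L', hi', rfl, ha, hL⟩ := iha (by simpa using hi) hl
        refine ⟨node a' b, i' + 1, L', by simpa using hi', rfl, ?_, hL⟩
        cases ha with
        | refl => exact .refl
        | single ha => exact .single (Rot.left b ha)
      | right _ hb => exact ⟨node a _, i + 1, L, by simpa using hi, rfl,
          .single (Rot.right a hb), .refl⟩

lemma tamariLE_node_iff {L R T : BinTree} :
    tamariLE T (node L R) ↔
      ∃ R' i L', tamariLE L' L ∧ tamariLE R' R ∧ i ≤ leftDepth R' ∧ T = graftLeft R' i L' := by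
  constructor
  · intro h
    induction h using Relation.ReflTransGen.head_induction_on with
    | refl => exact ⟨R, 0, L, .refl, .refl, Nat.zero_le _, by simp⟩
    | head hr _ ih =>
      obtain ⟨R', i, L', hL, hR, hi, rfl⟩ := ih
      obtain ⟨R'', i', L'', hi', rfl, hR', hL'⟩ := exists_graftLeft_of_rot hi hr
      exact ⟨R'', i', L'', hL'.to_reflTransGen.trans hL, hR'.to_reflTransGen.trans hR, hi', rfl⟩
  · rintro ⟨R', i, L', hL, hR, hi, rfl⟩
    exact (graftLeft_tamariLE_node L' hi).trans
      ((tamariLE_node_left R' hL).trans (tamariLE_node_right L hR))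

lemma eq_leaf_of_tamariLE_leaf {T : BinTree} (h : tamariLE T leaf) : T = leaf := by
  rcases Relation.ReflTransGen.cases_tail h with h | ⟨_, _, h⟩
  · exact h.symm
  · cases h

noncomputable def downSet : BinTree → Finset BinTree
  | leaf => {leaf}
  | node L R =>
    (downSet L ×ˢ (downSet R).sigma fun R' => Finset.range (leftDepth R' + 1)).image
      fun p => graftLeft p.2.1 p.2.2 p.1

@[simp] lemma mem_downSet {T T' : BinTree} : T' ∈ downSet T ↔ tamariLE T' T := by
  induction T generalizing T' with
  | leaf => simpa [downSet] using ⟨by rintro rfl; exact .refl, eq_leaf_of_tamariLE_leaf⟩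
  | node L R ihL ihR =>
    simp only [downSet, Finset.mem_image, Finset.mem_product, Finset.mem_sigma,
      Finset.mem_range, ihL, ihR, tamariLE_node_iff, Nat.lt_succ_iff]
    constructor
    · rintro ⟨⟨L', R', i⟩, ⟨hL, hR, hi⟩, rfl⟩
      exact ⟨R', i, L', hL, hR, hi, rfl⟩
    · rintro ⟨R', i, L', hL, hR, hi, rfl⟩
      exact ⟨⟨L', R', i⟩, ⟨hL, hR, hi⟩, rfl⟩

lemma polyDelta_eq_of_mul {g q : ℤ[X]} (h : (X - C 1) * q = X * g - C (g.eval 1)) :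
    polyDelta g = q := by
  rw [polyDelta, ← h, mul_divByMonic_cancel_left _ (monic_X_sub_C 1)]

lemma polyDelta_sum_X_pow {α : Type*} (s : Finset α) (d : α → ℕ) :
    polyDelta (∑ t ∈ s, X ^ d t) = ∑ t ∈ s, ∑ i ∈ Finset.range (d t + 1), (X : ℤ[X]) ^ i := by
  apply polyDelta_eq_of_mul
  simp only [eval_finsetSum, eval_pow, eval_X, one_pow, map_sum, Finset.mul_sum,
    ← Finset.sum_sub_distrib]
  refine Finset.sum_congr rfl fun t _ => ?_
  rw [map_one, ← Finset.mul_sum, mul_comm, geom_sum_mul]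
  ring

lemma BT_eq_sum_downSet (T : BinTree) : BT T = ∑ T' ∈ downSet T, X ^ leftDepth T' := by
  induction T with
  | leaf => simp [BT, downSet]
  | node L R ihL ihR =>
    have hinj : Set.InjOn (fun p : BinTree × (_ : BinTree) × ℕ => graftLeft p.2.1 p.2.2 p.1)
        ↑(downSet L ×ˢ (downSet R).sigma fun R' => Finset.range (leftDepth R' + 1)) := by
      rintro ⟨L₁, R₁, i₁⟩ h₁ ⟨L₂, R₂, i₂⟩ h₂ he
      simp only [Finset.coe_product, Set.mem_prod, Finset.mem_coe, Finset.mem_sigma,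
        Finset.mem_range, mem_downSet, Nat.lt_succ_iff] at h₁ h₂
      have hs : size L₁ = size L₂ := by
        rw [size_eq_of_tamariLE h₁.1, size_eq_of_tamariLE h₂.1]
      obtain ⟨rfl, rfl, rfl⟩ := graftLeft_inj h₁.2.2 h₂.2.2 hs he
      rfl
    rw [BT, ihL, ihR, polyDelta_sum_X_pow, downSet, Finset.sum_image hinj, Finset.sum_product,
      mul_assoc, Finset.sum_mul_sum, Finset.mul_sum]
    refine Finset.sum_congr rfl fun L' _ => ?_
    rw [Finset.sum_sigma, Finset.mul_sum]
    refine Finset.sum_congr rfl fun R' _ => ?_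
    rw [Finset.mul_sum, Finset.mul_sum]
    refine Finset.sum_congr rfl fun i hi => ?_
    rw [leftDepth_graftLeft L' (Nat.lt_succ_iff.mp (Finset.mem_range.mp hi))]
    ring

end BinTree

theorem stmt11_general (T : BinTree) (k : ℕ) :
    (BT T).coeff k =
      (({T' : BinTree | tamariLE T' T ∧ leftDepth T' = k}).ncard : ℤ) ∧
    (BT T).eval 1 = (({T' : BinTree | tamariLE T' T}).ncard : ℤ) := by
  classical
  have hk : {T' | tamariLE T' T ∧ leftDepth T' = k} =
      ↑((BinTree.downSet T).filter (leftDepth · = k)) := by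
    ext; simp
  have hall : {T' | tamariLE T' T} = ↑(BinTree.downSet T) := by
    ext; simp
  rw [hk, hall, Set.ncard_coe_finset, Set.ncard_coe_finset, BinTree.BT_eq_sum_downSet,
    Polynomial.finsetSum_coeff, Polynomial.eval_finsetSum]
  simp [Polynomial.coeff_X_pow, Finset.sum_boole, eq_comm]

/-- The coefficient of `x^k` in `B_T` counts the trees `T' ≤ T` whose leftmost
branch has exactly `k` nodes; `B_T(1)` counts all trees `T' ≤ T`. -/
theorem stmt11 (n : ℕ) (T : BinTree) (hT : T.size = n) (k : ℕ) :
    (BT T).coeff k =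
      (({T' : BinTree | tamariLE T' T ∧ leftDepth T' = k}).ncard : ℤ) ∧
    (BT T).eval 1 = (({T' : BinTree | tamariLE T' T}).ncard : ℤ) :=
  stmt11_general T k
end
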